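/- Let ψ₀ ∈ L¹(ℝ,ℂ) with ∫_ℝ y²|ψ₀(y)|dy < ∞, and let ρ(x,t) = |ψ(x,t)|² where ψ(x,t) = (2πit)^{−1/2} ∫_ℝ e^{i(x−y)²/(2t)} ψ₀(y) dy. Then for all x ∈ ℝ, T > 0, t ≥ 1: |ρ(x, tT) − (1/t)ρ(x/t, T)| ≤ (√2/(π t T²)) (∫_ℝ y²|ψ₀(y)|dy)(∫_ℝ |ψ₀(y)|dy). -/

import Mathlib

/-!
Write `ρ(x, s) = |F(x, s)|² / (2πs)` with `F(x, s) = ∫ e^{i(x-y)²/(2s)} ψ₀(y) dy`. The phases of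
`F(x, tT)` and `F(x/t, T)` differ by a constant (independent of `y`) plus `-(t-1) y² / (2tT)`, and a
constant phase does not change `|F|`; since `|e^{ia} - e^{ib}| ≤ |a - b|`, this gives
`||F(x, tT)| - |F(x/t, T)|| ≤ (t-1)/(2tT) ∫ y²|ψ₀|`. Both moduli are at most `∫ |ψ₀|`, so
`|a² - b²| = (a + b)|a - b|` bounds the difference of the squares.
-/

open MeasureTheory Complex

section PhaseIntegral

variable {α : Type*} [MeasurableSpace α] {μ : Measure α}

theorem norm_integral_exp_I_mul_mul_le (φ : α → ℝ) (f : α → ℂ) :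
    ‖∫ a, exp (I * φ a) * f a ∂μ‖ ≤ ∫ a, ‖f a‖ ∂μ :=
  (norm_integral_le_integral_norm _).trans_eq <| by
    simp only [norm_mul, norm_exp_I_mul_ofReal, one_mul]

theorem integrable_exp_I_mul_mul {φ : α → ℝ} {f : α → ℂ} (hφ : Measurable φ)
    (hf : Integrable f μ) : Integrable (fun a => exp (I * φ a) * f a) μ :=
  hf.bdd_mul (c := 1) (by fun_prop)
    (Filter.Eventually.of_forall fun a => (norm_exp_I_mul_ofReal (φ a)).le)

theorem norm_exp_I_mul_sub_exp_I_mul_le (θ₁ θ₂ : ℝ) :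
    ‖exp (I * θ₁) - exp (I * θ₂)‖ ≤ |θ₁ - θ₂| := by
  have h : exp (I * θ₁) - exp (I * θ₂) = exp (I * θ₂) * (exp (I * ↑(θ₁ - θ₂)) - 1) := by
    rw [mul_sub, mul_one, ← exp_add]
    push_cast
    ring_nf
  rw [h, norm_mul, norm_exp_I_mul_ofReal, one_mul]
  exact Real.norm_exp_I_mul_ofReal_sub_one_le

theorem norm_integral_exp_I_mul_mul_sub_le {φ₁ φ₂ : α → ℝ} {f : α → ℂ} {g : α → ℝ}
    (hφ₁ : Measurable φ₁) (hφ₂ : Measurable φ₂) (hf : Integrable f μ) (hg : Integrable g μ)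
    (hbound : ∀ a, |φ₁ a - φ₂ a| * ‖f a‖ ≤ g a) :
    ‖∫ a, exp (I * φ₁ a) * f a ∂μ - ∫ a, exp (I * φ₂ a) * f a ∂μ‖ ≤ ∫ a, g a ∂μ := by
  rw [← integral_sub (integrable_exp_I_mul_mul hφ₁ hf) (integrable_exp_I_mul_mul hφ₂ hf)]
  refine norm_integral_le_of_norm_le hg (Filter.Eventually.of_forall fun a => ?_)
  rw [← sub_mul, norm_mul]
  exact (mul_le_mul_of_nonneg_right (norm_exp_I_mul_sub_exp_I_mul_le _ _) (norm_nonneg _)).trans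
    (hbound a)

theorem abs_norm_integral_exp_I_mul_mul_sub_le {φ₁ φ₂ : α → ℝ} {f : α → ℂ} {g : α → ℝ}
    (c : ℝ) (hφ₁ : Measurable φ₁) (hφ₂ : Measurable φ₂) (hf : Integrable f μ)
    (hg : Integrable g μ) (hbound : ∀ a, |φ₁ a - φ₂ a - c| * ‖f a‖ ≤ g a) :
    |‖∫ a, exp (I * φ₁ a) * f a ∂μ‖ - ‖∫ a, exp (I * φ₂ a) * f a ∂μ‖| ≤ ∫ a, g a ∂μ := by
  have hshift : ∫ a, exp (I * ↑(φ₂ a + c)) * f a ∂μ =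
      exp (I * c) * ∫ a, exp (I * φ₂ a) * f a ∂μ := by
    rw [← integral_const_mul]
    congr 1 with a
    push_cast
    rw [mul_add, exp_add]
    ring
  have hnorm : ‖∫ a, exp (I * φ₂ a) * f a ∂μ‖ = ‖∫ a, exp (I * ↑(φ₂ a + c)) * f a ∂μ‖ := by
    rw [hshift, norm_mul, norm_exp_I_mul_ofReal, one_mul]
  rw [hnorm]
  refine (abs_norm_sub_norm_le _ _).trans ?_
  exact norm_integral_exp_I_mul_mul_sub_le hφ₁ (hφ₂.add_const c) hf hg
    fun a => by simpa only [sub_add_eq_sub_sub] using hbound a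

end PhaseIntegral

theorem norm_cpow_neg_half_sq (z : ℂ) : ‖z ^ (-(1 / 2) : ℂ)‖ ^ 2 = ‖z‖⁻¹ := by
  have : (-(1 / 2) : ℂ) = ((-(1 / 2) : ℝ) : ℂ) := by push_cast; ring
  rw [this, norm_cpow_real, ← Real.rpow_natCast, ← Real.rpow_mul (norm_nonneg z)]
  norm_num [Real.rpow_neg_one]

theorem abs_sq_sub_sq_le {a b M δ : ℝ} (ha : 0 ≤ a) (hb : 0 ≤ b) (haM : a ≤ M) (hbM : b ≤ M)
    (hab : |a - b| ≤ δ) : |a ^ 2 - b ^ 2| ≤ 2 * M * δ := by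
  rw [sq_sub_sq, abs_mul, abs_of_nonneg (add_nonneg ha hb)]
  exact mul_le_mul (by linarith) hab (abs_nonneg _) (by linarith)

noncomputable def freePhase (x s y : ℝ) : ℝ := (x - y) ^ 2 / (2 * s)

theorem freePhase_dilation_sub {t T : ℝ} (ht : t ≠ 0) (hT : T ≠ 0) (x y : ℝ) :
    freePhase x (t * T) y - freePhase (x / t) T y =
      freePhase x (t * T) 0 - freePhase (x / t) T 0 - (t - 1) / (2 * t * T) * y ^ 2 := by
  unfold freePhase
  field_simp
  ring

noncomputable def freeDensity (ψ₀ : ℝ → ℂ) (x s : ℝ) : ℝ :=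
  ‖(2 * (Real.pi : ℂ) * I * (s : ℂ)) ^ (-(1 / 2) : ℂ) *
    ∫ y : ℝ, exp (I * ((x : ℂ) - (y : ℂ)) ^ 2 / (2 * (s : ℂ))) * ψ₀ y‖ ^ 2

theorem freeDensity_eq (ψ₀ : ℝ → ℂ) (x : ℝ) {s : ℝ} (hs : 0 < s) :
    freeDensity ψ₀ x s = (2 * Real.pi * s)⁻¹ * ‖∫ y : ℝ, exp (I * freePhase x s y) * ψ₀ y‖ ^ 2 := by
  have hphase : ∀ y : ℝ, I * ((x : ℂ) - (y : ℂ)) ^ 2 / (2 * (s : ℂ)) = I * freePhase x s y := by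
    intro y
    simp only [freePhase]
    push_cast
    ring
  have hnorm : ‖2 * (Real.pi : ℂ) * I * (s : ℂ)‖ = 2 * Real.pi * s := by
    simp [abs_of_pos hs, abs_of_pos Real.pi_pos]
  simp only [freeDensity, hphase, norm_mul (_ ^ _), mul_pow, norm_cpow_neg_half_sq, hnorm]

theorem abs_freeDensity_dilation_sub_le {ψ₀ : ℝ → ℂ} (hψ₀ : Integrable ψ₀)
    (hmom : Integrable (fun y : ℝ => y ^ 2 * ‖ψ₀ y‖)) (x : ℝ) {T t : ℝ} (hT : 0 < T)
    (ht : 1 ≤ t) :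
    |freeDensity ψ₀ x (t * T) - freeDensity ψ₀ (x / t) T / t| ≤
      (t - 1) / (2 * Real.pi * t ^ 2 * T ^ 2) * (∫ y : ℝ, y ^ 2 * ‖ψ₀ y‖) * ∫ y : ℝ, ‖ψ₀ y‖ := by
  have ht₀ : 0 < t := one_pos.trans_le ht
  rw [freeDensity_eq _ _ (mul_pos ht₀ hT), freeDensity_eq _ _ hT]
  set M₂ := ∫ y : ℝ, y ^ 2 * ‖ψ₀ y‖
  set M₀ := ∫ y : ℝ, ‖ψ₀ y‖
  set A := ‖∫ y : ℝ, exp (I * freePhase x (t * T) y) * ψ₀ y‖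
  set B := ‖∫ y : ℝ, exp (I * freePhase (x / t) T y) * ψ₀ y‖
  set k := (t - 1) / (2 * t * T)
  have hAB : |A - B| ≤ k * M₂ := by
    rw [← integral_const_mul]
    refine abs_norm_integral_exp_I_mul_mul_sub_le (freePhase x (t * T) 0 - freePhase (x / t) T 0)
      (by fun_prop [freePhase]) (by fun_prop [freePhase]) hψ₀ (hmom.const_mul k) fun y => ?_
    rw [freePhase_dilation_sub ht₀.ne' hT.ne', sub_sub_cancel_left, abs_neg,
      abs_of_nonneg (by positivity), mul_assoc]
  have hsq : |A ^ 2 - B ^ 2| ≤ 2 * M₀ * (k * M₂) :=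
    abs_sq_sub_sq_le (norm_nonneg _) (norm_nonneg _) (norm_integral_exp_I_mul_mul_le _ _)
      (norm_integral_exp_I_mul_mul_le _ _) hAB
  calc _ = |(2 * Real.pi * (t * T))⁻¹ * (A ^ 2 - B ^ 2)| := by
        congr 1
        field_simp
    _ = (2 * Real.pi * (t * T))⁻¹ * |A ^ 2 - B ^ 2| := by
        rw [abs_mul, abs_of_pos (by positivity)]
    _ ≤ (2 * Real.pi * (t * T))⁻¹ * (2 * M₀ * (k * M₂)) := by gcongr
    _ = (t - 1) / (2 * Real.pi * t ^ 2 * T ^ 2) * M₂ * M₀ := by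
        simp only [k]
        field_simp

/-- The asymptotic space-time dilation property: for `ψ₀ ∈ L¹(ℝ,ℂ)` with finite second
absolute moment and `ρ(x,t) = |ψ(x,t)|²`, where
`ψ(x,t) = (2πit)^{−1/2} ∫ e^{i(x−y)²/(2t)} ψ₀(y) dy`, for all `x ∈ ℝ`, `T > 0`, `t ≥ 1`:
`|ρ(x, tT) − (1/t)ρ(x/t, T)| ≤ (√2/(π t T²)) (∫ y²|ψ₀|)(∫ |ψ₀|)`. -/
theorem schrodinger_space_time_dilation
    (ψ₀ : ℝ → ℂ) (hψ₀ : Integrable ψ₀)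
    (hmom : Integrable (fun y : ℝ => y ^ 2 * ‖ψ₀ y‖))
    (ψ : ℝ → ℝ → ℂ)
    (hψ : ∀ x t : ℝ, ψ x t = ((2 * (Real.pi : ℂ) * Complex.I * (t : ℂ)) ^ (-(1 / 2) : ℂ)) *
      ∫ y : ℝ, Complex.exp (Complex.I * ((x : ℂ) - (y : ℂ)) ^ 2 / (2 * (t : ℂ))) * ψ₀ y)
    (ρ : ℝ → ℝ → ℝ) (hρ : ∀ x t : ℝ, ρ x t = ‖ψ x t‖ ^ 2)
    (x T t : ℝ) (hT : 0 < T) (ht : 1 ≤ t) :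
    |ρ x (t * T) - (1 / t) * ρ (x / t) T| ≤
      (Real.sqrt 2 / (Real.pi * t * T ^ 2)) *
        (∫ y : ℝ, y ^ 2 * ‖ψ₀ y‖) * (∫ y : ℝ, ‖ψ₀ y‖) := by
  have hρ_eq : ∀ x s, ρ x s = freeDensity ψ₀ x s := fun x s => by rw [hρ, hψ, freeDensity]
  have ht₀ : 0 < t := one_pos.trans_le ht
  have hM₀ : 0 ≤ ∫ y : ℝ, ‖ψ₀ y‖ := integral_nonneg fun y => norm_nonneg _
  have hM₂ : 0 ≤ ∫ y : ℝ, y ^ 2 * ‖ψ₀ y‖ := integral_nonneg fun y => by positivity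
  have hconst : (t - 1) / (2 * Real.pi * t ^ 2 * T ^ 2) ≤ Real.sqrt 2 / (Real.pi * t * T ^ 2) := by
    rw [div_le_div_iff₀ (by positivity) (by positivity)]
    have : t - 1 ≤ 2 * t * Real.sqrt 2 := by nlinarith [Real.one_lt_sqrt_two]
    calc (t - 1) * (Real.pi * t * T ^ 2) ≤ (2 * t * Real.sqrt 2) * (Real.pi * t * T ^ 2) := by
          gcongr
      _ = Real.sqrt 2 * (2 * Real.pi * t ^ 2 * T ^ 2) := by ring
  rw [hρ_eq, hρ_eq, one_div_mul_eq_div]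
  refine (abs_freeDensity_dilation_sub_le hψ₀ hmom x hT ht).trans ?_
  gcongr
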